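/- Let a = (a_1 ≥ a_2 ≥ ⋯ ≥ a_p ≥ 0) be a finite non-increasing list of non-negative integers and define r_i = #{j : a_j ≥ i} for i ≥ 0 (so r_0 = p). Then ∑_{(j,k) : a_j > a_k} (a_j − a_k − 1) = ∑_{i ≥ 1} (r_0 − r_i)·r_{i+1}, where the left sum runs over all ordered pairs (j,k) with a_j > a_k. -/

import Mathlib

/-!
Since `a_j - a_k - 1 = #{i : a_k < i < a_j}` (truncated subtraction makes the case `a_j ≤ a_k`
automatic), the left side counts triples `(j, k, i)` with `a_k < i < a_j`. Counting them by `i`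
instead gives `∑_i #{k : a_k < i} · #{j : i < a_j} = ∑_i (r_0 - r_i) · r_{i+1}`.
-/

open Finset

lemma Ioo_eq_filter_Icc_one {x y N : ℕ} (hy : y ≤ N) :
    Ioo x y = {i ∈ Icc 1 N | x < i ∧ i < y} := by
  ext i
  simp only [mem_Ioo, mem_filter, mem_Icc]
  omega

lemma sum_sum_card_filter_between {ι : Type*} [Fintype ι] (a : ι → ℕ) (s : Finset ℕ) :
    ∑ j, ∑ k, #{i ∈ s | a k < i ∧ i < a j}
      = ∑ i ∈ s, #{k | a k < i} * #{j | i < a j} := by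
  simp only [card_filter, sum_mul_sum, ite_zero_mul_ite_zero, one_mul]
  rw [sum_comm]
  exact (sum_congr rfl fun k _ => sum_comm).trans sum_comm

lemma card_filter_lt_eq_card_sub {ι : Type*} [Fintype ι] (a : ι → ℕ) (i : ℕ) :
    #{k | a k < i} = Fintype.card ι - #{k | i ≤ a k} := by
  have h := card_filter_add_card_filter_not (s := (univ : Finset ι)) (fun k => i ≤ a k)
  simp only [not_le, card_univ] at h
  omega

theorem stmt_1_general (p N : ℕ) (a : Fin p → ℕ)
    (hbound : ∀ j, a j ≤ N) :
    let r : ℕ → ℕ := fun i => (Finset.univ.filter (fun j : Fin p => i ≤ a j)).card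
    (∑ j : Fin p, ∑ k : Fin p, if a k < a j then a j - a k - 1 else 0)
      = ∑ i ∈ Finset.Icc 1 N, (r 0 - r i) * r (i + 1) := by
  intro r
  have gap (j k : Fin p) : (if a k < a j then a j - a k - 1 else 0)
      = #{i ∈ Icc 1 N | a k < i ∧ i < a j} := by
    rw [← Ioo_eq_filter_Icc_one (hbound j), Nat.card_Ioo]
    split_ifs <;> omega
  have hr0 : r 0 = p := by simp [r]
  simp only [gap, sum_sum_card_filter_between, hr0, r, card_filter_lt_eq_card_sub,
    Fintype.card_fin]
  rfl

/-- Codimension of singular blocks in terms of the Weyr characteristic: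
`∑_{(j,k): a_j > a_k} (a_j - a_k - 1) = ∑_{i ≥ 1} (r₀ - rᵢ) r_{i+1}`. -/
theorem stmt_1 (p N : ℕ) (a : Fin p → ℕ)
    (hmono : ∀ j k : Fin p, j ≤ k → a k ≤ a j) (hbound : ∀ j, a j ≤ N) :
    let r : ℕ → ℕ := fun i => (Finset.univ.filter (fun j : Fin p => i ≤ a j)).card
    (∑ j : Fin p, ∑ k : Fin p, if a k < a j then a j - a k - 1 else 0)
      = ∑ i ∈ Finset.Icc 1 N, (r 0 - r i) * r (i + 1) :=
  stmt_1_general p N a hbound
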